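/- For any density matrices ρ and σ on ℂ^n with ρ ≠ σ and any α > 1, ‖sup_α(ρ/σ)·σ − ρ‖₁ / (sup_α(ρ/σ) − 1) = (α+1)/(α−1). -/

import Mathlib

open scoped ComplexOrder

/-- The trace norm of a matrix, `‖A‖₁ = Tr[√(AᴴA)]`. -/
noncomputable def traceNorm {n : ℕ} (A : Matrix (Fin n) (Fin n) ℂ) : ℝ :=
  (((Matrix.posSemidef_conjTranspose_mul_self A).1.eigenvectorUnitary : Matrix (Fin n) (Fin n) ℂ) *
    Matrix.diagonal ((fun x : ℝ => (x : ℂ)) ∘ (Real.sqrt ∘ (Matrix.posSemidef_conjTranspose_mul_self A).1.eigenvalues)) *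
    (star (Matrix.posSemidef_conjTranspose_mul_self A).1.eigenvectorUnitary :
      Matrix (Fin n) (Fin n) ℂ)).trace.re

/-- `sup_α(ρ/σ) = sup { Tr[Eρ]/Tr[Eσ] : α⁻¹·𝟙 ≤ E ≤ 𝟙 }`. -/
noncomputable def supAlpha {n : ℕ} (α : ℝ) (ρ σ : Matrix (Fin n) (Fin n) ℂ) : ℝ :=
  sSup { x : ℝ | ∃ E : Matrix (Fin n) (Fin n) ℂ,
    (E - ((α⁻¹ : ℝ) : ℂ) • (1 : Matrix (Fin n) (Fin n) ℂ)).PosSemidef ∧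
    ((1 : Matrix (Fin n) (Fin n) ℂ) - E).PosSemidef ∧
    x = ((E * ρ).trace.re) / ((E * σ).trace.re) }

/-!
Write `E_t = Tr (ρ - tσ)₊` for the hockey-stick divergence; by the spectral decomposition of
`ρ - tσ` it is the maximum of `Re Tr[P(ρ - tσ)]` over effects `0 ≤ P ≤ 1`. The operators
`α⁻¹ ≤ E ≤ 1` are exactly `E = α⁻¹ + (1 - α⁻¹) P` with `0 ≤ P ≤ 1`, so `t` bounds every ratio
`Tr[Eρ]/Tr[Eσ]` iff `(1 - α⁻¹) E_t ≤ α⁻¹ (t - 1)`. As `t ↦ E_t` is antitone and 1-Lipschitz, the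
supremum `s = sup_α(ρ/σ)` satisfies `(α - 1) E_s = s - 1`, and `s > 1` because `E_1 > 0` when
`ρ ≠ σ`. Finally `‖sσ - ρ‖₁ = Tr |ρ - sσ| = 2 E_s - Tr (ρ - sσ) = 2 E_s + s - 1`.
-/

open Matrix
open scoped MatrixOrder

section Trace

variable {ι : Type*} [Fintype ι]

theorem Matrix.trace_mul_nonneg {𝕜 : Type*} [RCLike 𝕜] [DecidableEq ι] {A B : Matrix ι ι 𝕜}
    (hA : 0 ≤ A) (hB : 0 ≤ B) : 0 ≤ (A * B).trace := by
  have hS : IsSelfAdjoint (CFC.sqrt B) := (CFC.sqrt_nonneg B).isSelfAdjoint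
  have hSAS := star_left_conjugate_nonneg hA (CFC.sqrt B)
  rw [hS.star_eq] at hSAS
  rw [← CFC.sqrt_mul_sqrt_self B, ← Matrix.mul_assoc, trace_mul_cycle]
  exact (nonneg_iff_posSemidef.mp hSAS).trace_nonneg

theorem Matrix.eq_zero_of_nonneg_of_re_trace_nonpos {A : Matrix ι ι ℂ} (hA : 0 ≤ A)
    (h : A.trace.re ≤ 0) : A = 0 := by
  have h₀ := (nonneg_iff_posSemidef.mp hA).trace_nonneg
  refine (nonneg_iff_posSemidef.mp hA).trace_eq_zero_iff.mp (le_antisymm ?_ h₀)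
  exact Complex.le_def.mpr ⟨h, (Complex.le_def.mp h₀).2.symm⟩

variable [DecidableEq ι]

theorem Matrix.re_trace_mul_mem_Icc {σ P : Matrix ι ι ℂ} (hσ : 0 ≤ σ) (hσtr : σ.trace = 1)
    (hP : P ∈ Set.Icc 0 1) : (P * σ).trace.re ∈ Set.Icc 0 1 := by
  have h₀ := (Complex.le_def.mp (trace_mul_nonneg hP.1 hσ)).1
  have h₁ := (Complex.le_def.mp (trace_mul_nonneg (sub_nonneg.mpr hP.2) hσ)).1
  simp only [Matrix.sub_mul, Matrix.one_mul, trace_sub, hσtr, Complex.sub_re, Complex.one_re,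
    Complex.zero_re] at h₀ h₁
  exact ⟨h₀, by linarith⟩

theorem Matrix.re_trace_mul_le_re_trace_posPart {H P : Matrix ι ι ℂ} (hH : IsSelfAdjoint H)
    (hP₀ : 0 ≤ P) (hP₁ : P ≤ 1) : (P * H).trace.re ≤ (H⁺).trace.re := by
  -- `Tr[PH] = Tr[PH₊] - Tr[PH₋]`, where `Tr[PH₋] ≥ 0` and `Tr[(1 - P)H₊] ≥ 0`.
  have h₁ := (trace_mul_nonneg hP₀ (CFC.negPart_nonneg H)).1
  have h₂ := (trace_mul_nonneg (sub_nonneg.mpr hP₁) (CFC.posPart_nonneg H)).1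
  nth_rw 1 [← CFC.posPart_sub_negPart H]
  simp only [Matrix.mul_sub, Matrix.sub_mul, Matrix.one_mul, trace_sub, Complex.sub_re,
    Complex.zero_re] at h₁ h₂ ⊢
  linarith

theorem Matrix.exists_mul_eq_posPart {H : Matrix ι ι ℂ} (hH : IsSelfAdjoint H) :
    ∃ P : Matrix ι ι ℂ, 0 ≤ P ∧ P ≤ 1 ∧ P * H = H⁺ := by
  set χ : ℝ → ℝ := fun x => if 0 < x then 1 else 0
  have hcont (f : ℝ → ℝ) : ContinuousOn f (spectrum ℝ H) := H.finite_real_spectrum.continuousOn f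
  refine ⟨cfc χ H, cfc_nonneg fun x _ => by positivity, cfc_le_one _ _ fun x _ => ?_, ?_⟩
  · simp only [χ]
    split_ifs <;> norm_num
  · nth_rw 2 [← cfc_id' ℝ H]
    rw [CFC.posPart_def, cfcₙ_eq_cfc, ← cfc_mul _ _ _ (hcont _) (hcont _)]
    refine cfc_congr fun x _ => ?_
    simp only [χ]
    split_ifs with h
    · simp [posPart_of_nonneg h.le]
    · simp [posPart_eq_zero.mpr (not_lt.mp h)]

theorem Matrix.re_trace_abs {H : Matrix ι ι ℂ} (hH : IsSelfAdjoint H) :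
    (CFC.abs H).trace.re = 2 * (H⁺).trace.re - H.trace.re := by
  have h := congr(($(CFC.abs_add_self H hH)).trace.re)
  simp only [two_nsmul, trace_add, Complex.add_re] at h
  linarith

end Trace

theorem traceNorm_eq_re_trace_abs {n : ℕ} (A : Matrix (Fin n) (Fin n) ℂ) :
    traceNorm A = (CFC.abs A).trace.re := by
  rw [CFC.abs, CFC.sqrt_eq_real_sqrt (star A * A) (star_mul_self_nonneg A), cfcₙ_eq_cfc,
    star_eq_conjTranspose, (posSemidef_conjTranspose_mul_self A).1.cfc_eq]
  rfl

section HockeyStick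

variable {ι : Type*} [Fintype ι] [DecidableEq ι] {ρ σ P : Matrix ι ι ℂ}

noncomputable def hockeyStick (ρ σ : Matrix ι ι ℂ) (t : ℝ) : ℝ :=
  ((ρ - (t : ℂ) • σ)⁺).trace.re

omit [Fintype ι] [DecidableEq ι] in
theorem Matrix.isSelfAdjoint_sub_ofReal_smul (hρ : IsSelfAdjoint ρ) (hσ : IsSelfAdjoint σ)
    (t : ℝ) : IsSelfAdjoint (ρ - (t : ℂ) • σ) :=
  hρ.sub (IsSelfAdjoint.smul (Complex.conj_ofReal t) hσ)

omit [DecidableEq ι] in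
theorem Matrix.re_trace_mul_sub_ofReal_smul (P ρ σ : Matrix ι ι ℂ) (t : ℝ) :
    (P * (ρ - (t : ℂ) • σ)).trace.re = (P * ρ).trace.re - t * (P * σ).trace.re := by
  simp [Matrix.mul_sub, trace_sub, trace_smul]

theorem le_hockeyStick (hρ : IsSelfAdjoint ρ) (hσ : IsSelfAdjoint σ) (hP : P ∈ Set.Icc 0 1)
    (t : ℝ) : (P * ρ).trace.re - t * (P * σ).trace.re ≤ hockeyStick ρ σ t := by
  rw [← re_trace_mul_sub_ofReal_smul]
  exact re_trace_mul_le_re_trace_posPart (isSelfAdjoint_sub_ofReal_smul hρ hσ t) hP.1 hP.2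

theorem exists_hockeyStick_eq (hρ : IsSelfAdjoint ρ) (hσ : IsSelfAdjoint σ) (t : ℝ) :
    ∃ P ∈ Set.Icc (0 : Matrix ι ι ℂ) 1,
      hockeyStick ρ σ t = (P * ρ).trace.re - t * (P * σ).trace.re := by
  obtain ⟨P, hP₀, hP₁, hPH⟩ := exists_mul_eq_posPart (isSelfAdjoint_sub_ofReal_smul hρ hσ t)
  exact ⟨P, ⟨hP₀, hP₁⟩, by rw [hockeyStick, ← hPH, re_trace_mul_sub_ofReal_smul]⟩

theorem hockeyStick_antitone (hρ : IsSelfAdjoint ρ) (hσ : 0 ≤ σ) :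
    Antitone (hockeyStick ρ σ) := by
  intro s t hst
  obtain ⟨P, hP, hPt⟩ := exists_hockeyStick_eq hρ hσ.isSelfAdjoint t
  have hPσ : 0 ≤ (P * σ).trace.re := by simpa using (Complex.le_def.mp (trace_mul_nonneg hP.1 hσ)).1
  have hs := le_hockeyStick hρ hσ.isSelfAdjoint hP s
  linarith [mul_le_mul_of_nonneg_right hst hPσ]

theorem hockeyStick_le_add_sub (hρ : IsSelfAdjoint ρ) (hσ : 0 ≤ σ) (hσtr : σ.trace = 1)
    {s t : ℝ} (hst : s ≤ t) : hockeyStick ρ σ s ≤ hockeyStick ρ σ t + (t - s) := by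
  obtain ⟨P, hP, hPs⟩ := exists_hockeyStick_eq hρ hσ.isSelfAdjoint s
  have hPσ := re_trace_mul_mem_Icc hσ hσtr hP
  have ht := le_hockeyStick hρ hσ.isSelfAdjoint hP t
  linarith [mul_le_mul_of_nonneg_left hPσ.2 (sub_nonneg.mpr hst)]

theorem hockeyStick_zero (hρ : 0 ≤ ρ) (hρtr : ρ.trace = 1) : hockeyStick ρ σ 0 = 1 := by
  simp [hockeyStick, (CFC.posPart_eq_self ρ).mpr hρ, hρtr]

theorem hockeyStick_one_pos (hρ : IsSelfAdjoint ρ) (hσ : IsSelfAdjoint σ)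
    (htr : ρ.trace = σ.trace) (hne : ρ ≠ σ) : 0 < hockeyStick ρ σ 1 := by
  set H := ρ - σ
  have hH : IsSelfAdjoint H := hρ.sub hσ
  have hHtr : H.trace = 0 := by simp [H, trace_sub, htr]
  by_contra! hpos
  have hplus : H⁺ = 0 := eq_zero_of_nonneg_of_re_trace_nonpos (CFC.posPart_nonneg H)
    (by simpa [hockeyStick, H] using hpos)
  have hminus : H⁻ = 0 := by
    refine eq_zero_of_nonneg_of_re_trace_nonpos (CFC.negPart_nonneg H) ?_
    have h := congr((($(CFC.posPart_sub_negPart H hH)).trace.re))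
    simp only [hplus, trace_sub, hHtr, Complex.sub_re, Complex.zero_re, trace_zero] at h
    linarith
  have hzero : H = 0 := by rw [← CFC.posPart_sub_negPart H hH, hplus, hminus, sub_zero]
  exact hne (sub_eq_zero.mp hzero)

theorem traceNorm_ofReal_smul_sub {n : ℕ} {ρ σ : Matrix (Fin n) (Fin n) ℂ}
    (hρ : IsSelfAdjoint ρ) (hσ : IsSelfAdjoint σ) (hρtr : ρ.trace = 1) (hσtr : σ.trace = 1)
    (t : ℝ) : traceNorm ((t : ℂ) • σ - ρ) = 2 * hockeyStick ρ σ t + t - 1 := by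
  rw [traceNorm_eq_re_trace_abs, ← neg_sub, CFC.abs_neg,
    re_trace_abs (isSelfAdjoint_sub_ofReal_smul hρ hσ t), hockeyStick]
  simp [trace_sub, trace_smul, hρtr, hσtr]
  ring

theorem re_trace_smul_one_add_smul_mul {τ : Matrix ι ι ℂ} (hτ : τ.trace = 1) (a c : ℝ)
    (P : Matrix ι ι ℂ) : (((a : ℂ) • 1 + (c : ℂ) • P) * τ).trace.re = a + c * (P * τ).trace.re := by
  simp [Matrix.add_mul, trace_add, trace_smul, hτ]

omit [Fintype ι] in
theorem one_sub_smul_one_add_smul {a c : ℝ} (hac : a + c = 1) (P : Matrix ι ι ℂ) :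
    1 - ((a : ℂ) • 1 + (c : ℂ) • P) = (c : ℂ) • (1 - P) := by
  nth_rw 1 [← one_smul ℂ (1 : Matrix ι ι ℂ)]
  rw [← show ((a + c : ℝ) : ℂ) = 1 by simp [hac], Complex.ofReal_add, add_smul, smul_sub]
  abel

theorem mem_upperBounds_image_ratio_iff (hρ : IsSelfAdjoint ρ) (hσ : 0 ≤ σ) (hσtr : σ.trace = 1)
    {a c : ℝ} (ha : 0 < a) (hc : 0 < c) (t : ℝ) :
    t ∈ upperBounds ((fun P : Matrix ι ι ℂ =>
      (a + c * (P * ρ).trace.re) / (a + c * (P * σ).trace.re)) '' Set.Icc 0 1) ↔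
      c * hockeyStick ρ σ t ≤ a * (t - 1) := by
  have key : ∀ P ∈ Set.Icc (0 : Matrix ι ι ℂ) 1,
      (a + c * (P * ρ).trace.re) / (a + c * (P * σ).trace.re) ≤ t ↔
        c * ((P * ρ).trace.re - t * (P * σ).trace.re) ≤ a * (t - 1) := by
    intro P hP
    have := (re_trace_mul_mem_Icc hσ hσtr hP).1
    rw [div_le_iff₀ (by positivity)]
    constructor <;> intro h <;> linarith
  rw [mem_upperBounds, Set.forall_mem_image]
  constructor
  · intro h
    obtain ⟨P, hP, hPt⟩ := exists_hockeyStick_eq hρ hσ.isSelfAdjoint t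
    rw [hPt]
    exact (key P hP).1 (h hP)
  · intro h P hP
    exact (key P hP).2
      ((mul_le_mul_of_nonneg_left (le_hockeyStick hρ hσ.isSelfAdjoint hP t) hc.le).trans h)

end HockeyStick

section SupAlpha

variable {n : ℕ} {ρ σ : Matrix (Fin n) (Fin n) ℂ} {α : ℝ}

theorem supAlpha_eq_sSup_image (hα : 1 < α) (hρtr : ρ.trace = 1) (hσtr : σ.trace = 1) :
    supAlpha α ρ σ = sSup ((fun P : Matrix (Fin n) (Fin n) ℂ =>
      (α⁻¹ + (1 - α⁻¹) * (P * ρ).trace.re) / (α⁻¹ + (1 - α⁻¹) * (P * σ).trace.re)) ''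
        Set.Icc 0 1) := by
  have hc : (0 : ℂ) < ((1 - α⁻¹ : ℝ) : ℂ) := by
    rw [Complex.zero_lt_real]
    linarith [inv_lt_one_of_one_lt₀ hα]
  have hc' : (0 : ℂ) ≤ ((1 - α⁻¹ : ℝ) : ℂ)⁻¹ := inv_nonneg.mpr hc.le
  have hac : α⁻¹ + (1 - α⁻¹) = 1 := add_sub_cancel _ _
  unfold supAlpha
  congr 1
  ext x
  constructor
  · rintro ⟨E, hE₀, hE₁, rfl⟩
    set P := ((1 - α⁻¹ : ℝ) : ℂ)⁻¹ • (E - ((α⁻¹ : ℝ) : ℂ) • 1)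
    have hE : E = ((α⁻¹ : ℝ) : ℂ) • 1 + ((1 - α⁻¹ : ℝ) : ℂ) • P := by
      rw [smul_smul, mul_inv_cancel₀ hc.ne', one_smul, add_sub_cancel]
    have h1P : 1 - P = ((1 - α⁻¹ : ℝ) : ℂ)⁻¹ • (1 - E) := by
      rw [hE, one_sub_smul_one_add_smul hac, smul_smul, inv_mul_cancel₀ hc.ne', one_smul]
    refine ⟨P, ⟨(hE₀.smul hc').nonneg, ?_⟩, ?_⟩
    · rw [le_iff, h1P]
      exact hE₁.smul hc'
    · rw [hE, re_trace_smul_one_add_smul_mul hρtr, re_trace_smul_one_add_smul_mul hσtr]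
  · rintro ⟨P, ⟨hP₀, hP₁⟩, rfl⟩
    refine ⟨((α⁻¹ : ℝ) : ℂ) • 1 + ((1 - α⁻¹ : ℝ) : ℂ) • P, ?_, ?_, ?_⟩
    · rw [add_sub_cancel_left]
      exact (nonneg_iff_posSemidef.mp hP₀).smul hc.le
    · rw [one_sub_smul_one_add_smul hac]
      exact hP₁.smul hc.le
    · rw [re_trace_smul_one_add_smul_mul hρtr, re_trace_smul_one_add_smul_mul hσtr]

theorem hockeyStick_supAlpha (hα : 1 < α) (hρ : 0 ≤ ρ) (hρtr : ρ.trace = 1) (hσ : 0 ≤ σ)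
    (hσtr : σ.trace = 1) :
    (α - 1) * hockeyStick ρ σ (supAlpha α ρ σ) = supAlpha α ρ σ - 1 := by
  have ha : 0 < α⁻¹ := by positivity
  have hc : 0 < 1 - α⁻¹ := by linarith [inv_lt_one_of_one_lt₀ hα]
  have hub := mem_upperBounds_image_ratio_iff hρ.isSelfAdjoint hσ hσtr ha hc
  rw [supAlpha_eq_sSup_image hα hρtr hσtr]
  set S := (fun P : Matrix (Fin n) (Fin n) ℂ =>
      (α⁻¹ + (1 - α⁻¹) * (P * ρ).trace.re) / (α⁻¹ + (1 - α⁻¹) * (P * σ).trace.re)) '' Set.Icc 0 1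
  have hS : S.Nonempty := ⟨_, 0, ⟨le_rfl, zero_le_one⟩, rfl⟩
  have hbdd : BddAbove S := by
    refine ⟨α, (hub α).2 ?_⟩
    have hα₀ := hockeyStick_antitone hρ.isSelfAdjoint hσ (by linarith : (0 : ℝ) ≤ α)
    rw [hockeyStick_zero hρ hρtr] at hα₀
    calc (1 - α⁻¹) * hockeyStick ρ σ α ≤ (1 - α⁻¹) * 1 := by gcongr
      _ = α⁻¹ * (α - 1) := by field_simp
  have hlub := isLUB_csSup hS hbdd
  set s := sSup S
  have h₁ : (1 - α⁻¹) * hockeyStick ρ σ s ≤ α⁻¹ * (s - 1) := (hub s).1 hlub.1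
  have h₂ : α⁻¹ * (s - 1) ≤ (1 - α⁻¹) * hockeyStick ρ σ s := by
    refine le_of_forall_pos_le_add fun ε hε => ?_
    have hnot : s - ε ∉ upperBounds S := fun h => by linarith [hlub.2 h]
    rw [hub, not_le] at hnot
    have hlip := hockeyStick_le_add_sub hρ.isSelfAdjoint hσ hσtr (show s - ε ≤ s by linarith)
    linarith [mul_le_mul_of_nonneg_left hlip hc.le]
  have heq := le_antisymm h₁ h₂
  field_simp at heq
  linarith

theorem one_lt_supAlpha (hα : 1 < α) (hρ : 0 ≤ ρ) (hρtr : ρ.trace = 1) (hσ : 0 ≤ σ)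
    (hσtr : σ.trace = 1) (hne : ρ ≠ σ) : 1 < supAlpha α ρ σ := by
  by_contra! h
  have hfix := hockeyStick_supAlpha hα hρ hρtr hσ hσtr
  have hpos := hockeyStick_one_pos hρ.isSelfAdjoint hσ.isSelfAdjoint (hρtr.trans hσtr.symm) hne
  have hmono := hockeyStick_antitone hρ.isSelfAdjoint hσ h
  linarith [mul_pos (sub_pos.mpr hα) (hpos.trans_le hmono)]

end SupAlpha

/-- Remark 2 of the paper: for density matrices `ρ ≠ σ` on `ℂ^n` and `α > 1`,
`‖sup_α(ρ/σ)·σ - ρ‖₁ / (sup_α(ρ/σ) - 1) = (α+1)/(α-1)`. -/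
theorem traceNorm_at_supAlpha
    {n : ℕ} (ρ σ : Matrix (Fin n) (Fin n) ℂ)
    (hρ : ρ.PosSemidef) (hρtr : ρ.trace = 1)
    (hσ : σ.PosSemidef) (hσtr : σ.trace = 1)
    (hne : ρ ≠ σ) (α : ℝ) (hα : 1 < α) :
    traceNorm (((supAlpha α ρ σ : ℝ) : ℂ) • σ - ρ) / (supAlpha α ρ σ - 1) =
      (α + 1) / (α - 1) := by
  have hfix := hockeyStick_supAlpha hα hρ.nonneg hρtr hσ.nonneg hσtr
  have hs := one_lt_supAlpha hα hρ.nonneg hρtr hσ.nonneg hσtr hne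
  rw [traceNorm_ofReal_smul_sub hρ.isHermitian hσ.isHermitian hρtr hσtr,
    div_eq_div_iff (by linarith) (by linarith)]
  linear_combination 2 * hfix
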